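/- For any bounded operator X on a complex Hilbert space, w(X) ≤ (1/2)(‖X‖ + w(X̃)), where X̃ = |X|^{1/2} V |X|^{1/2} is the Aluthge transform of X (X = V|X| the polar decomposition). -/

import Mathlib

set_option synthInstance.maxHeartbeats 1000000
set_option maxHeartbeats 1000000

open scoped InnerProductSpace

/-- Numerical radius of a bounded operator on a complex Hilbert space. -/
noncomputable def numRad {H : Type*} [NormedAddCommGroup H] [InnerProductSpace ℂ H]
    (T : H →L[ℂ] H) : ℝ :=
  ⨆ z : {z : H // ‖z‖ = 1}, ‖(⟪T z.1, z.1⟫_ℂ : ℂ)‖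

/-- Crawford number. -/
noncomputable def crawford {H : Type*} [NormedAddCommGroup H] [InnerProductSpace ℂ H]
    (T : H →L[ℂ] H) : ℝ :=
  ⨅ z : {z : H // ‖z‖ = 1}, ‖(⟪T z.1, z.1⟫_ℂ : ℂ)‖

/-- The 2×2 block operator matrix `[[A, B], [C, D]]` acting on `H ⊕ H`
(the ℓ² direct sum `WithLp 2 (H × H)`), sending `(x, y)` to `(Ax + By, Cx + Dy)`. -/
noncomputable def blk {H : Type*} [NormedAddCommGroup H] [InnerProductSpace ℂ H]
    (A B C D : H →L[ℂ] H) : WithLp 2 (H × H) →L[ℂ] WithLp 2 (H × H) :=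
  (((WithLp.prodContinuousLinearEquiv 2 ℂ H H).symm.toContinuousLinearMap).comp
    (((A.comp (ContinuousLinearMap.fst ℂ H H) + B.comp (ContinuousLinearMap.snd ℂ H H)).prod
      (C.comp (ContinuousLinearMap.fst ℂ H H) + D.comp (ContinuousLinearMap.snd ℂ H H))))).comp
    ((WithLp.prodContinuousLinearEquiv 2 ℂ H H).toContinuousLinearMap)


/-!
Put `Q = |X|^{1/2}`, so that `X = V Q²` and the Aluthge transform is `X̃ = Q V Q`. Since `V*V` fixes
`Q² = |X|`, the C*-identity shows that it fixes `Q`, i.e. `V` is isometric on the range of `Q`.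
For a unit vector `x`, `⟪X x, x⟫ = ⟪Q x, Q V* x⟫`; rotating the second vector by a unimodular `θ`
gives `4 |⟪X x, x⟫| ≤ ‖Q x + θ Q V* x‖² ≤ ‖(1 + θ̄ V) Q‖²`. For a unit vector `y`,
`‖(1 + θ̄ V) Q y‖² = 2 ‖Q y‖² + 2 Re (θ̄ ⟪Q y, V Q y⟫) ≤ 2 ‖X‖ + 2 |⟪X̃ y, y⟫|`.
-/

section NumericalRadius

variable {H : Type*} [NormedAddCommGroup H] [InnerProductSpace ℂ H]

lemma numRad_nonneg (T : H →L[ℂ] H) : 0 ≤ numRad T :=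
  Real.iSup_nonneg fun _ => norm_nonneg _

lemma norm_inner_le_numRad (T : H →L[ℂ] H) {x : H} (hx : ‖x‖ = 1) :
    ‖⟪T x, x⟫_ℂ‖ ≤ numRad T := by
  refine le_ciSup (f := fun y : {y : H // ‖y‖ = 1} => ‖⟪T y.1, y.1⟫_ℂ‖) ⟨‖T‖, ?_⟩ ⟨x, hx⟩
  rintro r ⟨⟨y, hy⟩, rfl⟩
  calc ‖⟪T y, y⟫_ℂ‖ ≤ ‖T y‖ * ‖y‖ := norm_inner_le_norm _ _
    _ ≤ ‖T‖ * ‖y‖ * ‖y‖ := by gcongr; exact T.le_opNorm y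
    _ = ‖T‖ := by rw [hy, mul_one, mul_one]

lemma numRad_le {T : H →L[ℂ] H} {M : ℝ} (hM : 0 ≤ M)
    (h : ∀ x : H, ‖x‖ = 1 → ‖⟪T x, x⟫_ℂ‖ ≤ M) : numRad T ≤ M :=
  Real.iSup_le (fun x => h x.1 x.2) hM

end NumericalRadius

lemma exists_norm_eq_one_four_mul_norm_inner_le {𝕜 E : Type*} [RCLike 𝕜] [NormedAddCommGroup E]
    [InnerProductSpace 𝕜 E] (a b : E) :
    ∃ θ : 𝕜, ‖θ‖ = 1 ∧ 4 * ‖⟪a, b⟫_𝕜‖ ≤ ‖a + θ • b‖ ^ 2 := by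
  obtain ⟨θ, hθ, hθc⟩ : ∃ θ : 𝕜, ‖θ‖ = 1 ∧ θ * ⟪a, b⟫_𝕜 = ‖⟪a, b⟫_𝕜‖ := by
    by_cases hc : ⟪a, b⟫_𝕜 = 0
    · exact ⟨1, norm_one, by simp [hc]⟩
    · refine ⟨‖⟪a, b⟫_𝕜‖ / ⟪a, b⟫_𝕜, ?_, div_mul_cancel₀ _ hc⟩
      rw [norm_div, RCLike.norm_ofReal, abs_norm, div_self (norm_ne_zero_iff.mpr hc)]
  refine ⟨θ, hθ, ?_⟩
  rw [norm_add_sq (𝕜 := 𝕜), inner_smul_right, hθc, RCLike.ofReal_re, norm_smul, hθ, one_mul]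
  nlinarith [norm_inner_le_norm (𝕜 := 𝕜) a b, sq_nonneg (‖a‖ - ‖b‖)]

lemma mul_eq_of_mul_mul_self_eq {A : Type*} [NormedRing A] [StarRing A] [CStarRing A] {e q : A}
    (hq : IsSelfAdjoint q) (h : e * (q * q) = q * q) : e * q = q := by
  have h0 : (1 - e) * q * star ((1 - e) * q) = 0 := by
    rw [star_mul, hq.star_eq, mul_assoc, ← mul_assoc q, ← mul_assoc, sub_mul, one_mul, h,
      sub_self, zero_mul]
  rw [CStarRing.mul_star_self_eq_zero_iff, sub_mul, one_mul, sub_eq_zero] at h0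
  exact h0.symm

section Operators

variable {H : Type*} [NormedAddCommGroup H] [InnerProductSpace ℂ H] [CompleteSpace H]

lemma norm_apply_eq_of_star_mul_self_apply_eq {V : H →L[ℂ] H} {z : H}
    (h : (star V * V) z = z) : ‖V z‖ = ‖z‖ := by
  rw [← sq_eq_sq₀ (norm_nonneg _) (norm_nonneg _),
    ContinuousLinearMap.apply_norm_sq_eq_inner_adjoint_left, ← ContinuousLinearMap.star_eq_adjoint]
  exact h.symm ▸ inner_self_eq_norm_sq (𝕜 := ℂ) z

lemma IsSelfAdjoint.inner_mul_mul_apply_self {Q : H →L[ℂ] H} (hQ : IsSelfAdjoint Q)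
    (V : H →L[ℂ] H) (y : H) : ⟪(Q * V * Q) y, y⟫_ℂ = ⟪V (Q y), Q y⟫_ℂ :=
  hQ.isSymmetric.apply_clm (V (Q y)) y

lemma IsSelfAdjoint.inner_mul_mul_self_apply_self {Q : H →L[ℂ] H} (hQ : IsSelfAdjoint Q)
    (V : H →L[ℂ] H) (x : H) : ⟪(V * (Q * Q)) x, x⟫_ℂ = ⟪Q x, Q (star V x)⟫_ℂ := by
  rw [ContinuousLinearMap.star_eq_adjoint]
  show ⟪V (Q (Q x)), x⟫_ℂ = _
  rw [← ContinuousLinearMap.adjoint_inner_right V]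
  exact hQ.isSymmetric.apply_clm _ _

lemma norm_one_add_smul_mul_sq_le {Q V : H →L[ℂ] H} (hQ : IsSelfAdjoint Q)
    (hVQ : star V * V * Q = Q) {θ : ℂ} (hθ : ‖θ‖ = 1) :
    ‖(1 + θ • V) * Q‖ ^ 2 ≤ 2 * (‖Q‖ ^ 2 + numRad (Q * V * Q)) := by
  set M := 2 * (‖Q‖ ^ 2 + numRad (Q * V * Q))
  have hM : 0 ≤ M := by have := numRad_nonneg (Q * V * Q); positivity
  suffices h : ∀ y : H, ‖y‖ = 1 → ‖((1 + θ • V) * Q) y‖ ^ 2 ≤ M by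
    have hle := ContinuousLinearMap.opNorm_le_of_unit_norm (Real.sqrt_nonneg M)
      fun y hy => Real.le_sqrt_of_sq_le (h y hy)
    calc ‖(1 + θ • V) * Q‖ ^ 2 ≤ √M ^ 2 := by gcongr
      _ = M := Real.sq_sqrt hM
  intro y hy
  have hVQy : ‖V (Q y)‖ = ‖Q y‖ :=
    norm_apply_eq_of_star_mul_self_apply_eq (congrArg (· y) hVQ)
  have hQy : ‖Q y‖ ≤ ‖Q‖ := by simpa [hy] using Q.le_opNorm y
  have hre : RCLike.re ⟪Q y, θ • V (Q y)⟫_ℂ ≤ numRad (Q * V * Q) :=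
    calc RCLike.re ⟪Q y, θ • V (Q y)⟫_ℂ ≤ ‖⟪Q y, θ • V (Q y)⟫_ℂ‖ := RCLike.re_le_norm _
      _ = ‖⟪(Q * V * Q) y, y⟫_ℂ‖ := by
        rw [inner_smul_right, norm_mul, hθ, one_mul, hQ.inner_mul_mul_apply_self,
          ← inner_conj_symm, RCLike.norm_conj]
      _ ≤ numRad (Q * V * Q) := norm_inner_le_numRad _ hy
  calc ‖((1 + θ • V) * Q) y‖ ^ 2 = ‖Q y + θ • V (Q y)‖ ^ 2 := rfl
    _ = ‖Q y‖ ^ 2 + 2 * RCLike.re ⟪Q y, θ • V (Q y)⟫_ℂ + ‖Q y‖ ^ 2 := by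
      rw [norm_add_sq (𝕜 := ℂ), norm_smul, hθ, one_mul, hVQy]
    _ ≤ M := by nlinarith [norm_nonneg (Q y)]

end Operators

theorem numRad_le_half_norm_add_numRad_aluthge {H : Type*} [NormedAddCommGroup H]
    [InnerProductSpace ℂ H] [CompleteSpace H] (X V : H →L[ℂ] H)
    (hV : X = V * CFC.sqrt (star X * X))
    (hV' : star V * X = CFC.sqrt (star X * X)) :
    numRad X ≤ (1 / 2) *
      (‖X‖ + numRad (CFC.sqrt (CFC.sqrt (star X * X)) * V *
        CFC.sqrt (CFC.sqrt (star X * X)))) := by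
  set P := CFC.sqrt (star X * X)
  set Q := CFC.sqrt P
  have hQ : IsSelfAdjoint Q := (CFC.sqrt_nonneg P).isSelfAdjoint
  have hQQ : Q * Q = P := CFC.sqrt_mul_sqrt_self P (CFC.sqrt_nonneg _)
  have hVQ : star V * V * Q = Q :=
    mul_eq_of_mul_mul_self_eq hQ (by rw [hQQ, mul_assoc, ← hV, hV'])
  have hQX : ‖Q‖ ^ 2 = ‖X‖ := by
    rw [CFC.norm_sqrt P (CFC.sqrt_nonneg _), Real.sq_sqrt (norm_nonneg P)]
    exact CFC.norm_abs
  refine numRad_le (by have := numRad_nonneg (Q * V * Q); positivity) fun x hx => ?_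
  have hc : ⟪X x, x⟫_ℂ = ⟪Q x, Q (star V x)⟫_ℂ := by
    rw [← hQ.inner_mul_mul_self_apply_self, hQQ, ← hV]
  obtain ⟨θ, hθ, hle⟩ := exists_norm_eq_one_four_mul_norm_inner_le (𝕜 := ℂ) (Q x) (Q (star V x))
  have hstar : star ((1 + star θ • V) * Q) x = Q x + θ • Q (star V x) := by
    simp [hQ.star_eq]
  have hnorm : ‖Q x + θ • Q (star V x)‖ ≤ ‖(1 + star θ • V) * Q‖ := by
    have := (star ((1 + star θ • V) * Q)).le_opNorm x
    rwa [hstar, hx, mul_one, norm_star] at this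
  have hD := norm_one_add_smul_mul_sq_le hQ hVQ (θ := star θ) (by rw [norm_star, hθ])
  calc ‖⟪X x, x⟫_ℂ‖ ≤ ‖Q x + θ • Q (star V x)‖ ^ 2 / 4 := by rw [hc]; linarith
    _ ≤ ‖(1 + star θ • V) * Q‖ ^ 2 / 4 := by gcongr
    _ ≤ 2 * (‖Q‖ ^ 2 + numRad (Q * V * Q)) / 4 := by gcongr
    _ = 1 / 2 * (‖X‖ + numRad (Q * V * Q)) := by rw [hQX]; ring
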